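/- arXiv:2212.13455 — 6 statements merged into one kernel-verified Lean document; each statement's English description precedes it below -/
import Mathlib

section
/- The orthogonal complement of 𝓥 in H (with respect to the inner product ⟨·,·⟩ of H) is 𝓥^⊥ = {(v0, v_·, v1) ∈ H : there exists ν ∈ Π such that v_t = Z_tᵀ J ν for almost every t ∈ [0,1], g0(Z0v0 − J0ν, Z0w) = 0 for all w ∈ ℝ^{n0}, and g1(Φ̃Z1v1 − J1Φ̃ν, Φ̃Z1w) = 0 for all w ∈ ℝ^{n1}}. -/
/-!
`𝓥` is the preimage of `Π` under the finite-rank map `B u = Z0 u0 + ∫ Z u + Z1 u1`, so a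
functional vanishes on `𝓥` iff it is `φ ∘ B` for a functional `φ` vanishing on `Π`. As `Π` is
Lagrangian, `ν ↦ σ(ν, ·)` maps `Π` injectively into the annihilator of `Π`, which has the same
dimension `n`; hence `φ = σ(ν, ·)` with `ν ∈ Π`. Splitting `⟨·, v⟩ = σ(ν, B ·)` into its three
components gives the three conditions: the `L²` one says `v = Zᵀ J ν` almost everywhere, and the
boundary ones follow from `gᵢ(Jᵢ x, y) = σ(x, y)` and the symplecticity of `Φ̃`.
-/

open Matrix MeasureTheory

noncomputable section

/-- The standard symplectic matrix `J = [[0, −I],[I, 0]]` on `ℝ^{2n} = ℝⁿ ⊕ ℝⁿ`. -/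
def Jmat (n : ℕ) : Matrix (Fin n ⊕ Fin n) (Fin n ⊕ Fin n) ℝ :=
  Matrix.fromBlocks 0 (-1) 1 0

/-- The standard symplectic form `σ(a,b) = ⟨Ja, b⟩` on `ℝ^{2n}`. -/
def symp (n : ℕ) (a b : (Fin n ⊕ Fin n) → ℝ) : ℝ := (Jmat n *ᵥ a) ⬝ᵥ b

/-- The scalar product determined by a (positive definite) matrix `G`. -/
def gApp {n : ℕ} (G : Matrix (Fin n ⊕ Fin n) (Fin n ⊕ Fin n) ℝ)
    (x y : (Fin n ⊕ Fin n) → ℝ) : ℝ := x ⬝ᵥ (G *ᵥ y)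

namespace LinearMap.BilinForm

variable {K V E : Type*} [Field K] [AddCommGroup V] [Module K V] [FiniteDimensional K V]
  [AddCommGroup E] [Module K E] {B : LinearMap.BilinForm K V} {W : Submodule K V}

theorem exists_mem_eq_of_mem_dualAnnihilator (hB : B.Nondegenerate)
    (hW : ∀ x ∈ W, ∀ y ∈ W, B x y = 0) (hdim : 2 * Module.finrank K W = Module.finrank K V)
    {φ : Module.Dual K V} (hφ : φ ∈ W.dualAnnihilator) : ∃ ν ∈ W, B ν = φ := by
  have hle : W.map (B.toDual hB).toLinearMap ≤ W.dualAnnihilator := by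
    rintro _ ⟨ν, hν, rfl⟩
    exact (Submodule.mem_dualAnnihilator _).2 (hW ν hν)
  have hann := Subspace.finrank_add_finrank_dualAnnihilator_eq W
  rw [← Submodule.eq_of_le_of_finrank_eq hle (by rw [LinearEquiv.finrank_map_eq]; omega)] at hφ
  obtain ⟨ν, hν, rfl⟩ := hφ
  exact ⟨ν, hν, rfl⟩

theorem forall_mem_comap_imp_eq_zero_iff (hB : B.Nondegenerate)
    (hW : ∀ x ∈ W, ∀ y ∈ W, B x y = 0) (hdim : 2 * Module.finrank K W = Module.finrank K V)
    (L : E →ₗ[K] V) (ℓ : Module.Dual K E) :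
    (∀ u, L u ∈ W → ℓ u = 0) ↔ ∃ ν ∈ W, ∀ u, ℓ u = B ν (L u) := by
  refine ⟨fun hℓ => ?_, fun ⟨ν, hν, hℓ⟩ u hu => (hℓ u).trans (hW ν hν _ hu)⟩
  have hker : ℓ ∈ (LinearMap.ker (W.mkQ ∘ₗ L)).dualAnnihilator :=
    (Submodule.mem_dualAnnihilator _).2 fun u hu =>
      hℓ u ((Submodule.Quotient.mk_eq_zero W).1 hu)
  obtain ⟨ψ, rfl⟩ := (LinearMap.range_dualMap_eq_dualAnnihilator_ker _).ge hker
  obtain ⟨ν, hν, hνψ⟩ := exists_mem_eq_of_mem_dualAnnihilator hB hW hdim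
    (φ := W.mkQ.dualMap ψ) ((Submodule.mem_dualAnnihilator _).2 fun w hw => by
      simp [(Submodule.Quotient.mk_eq_zero W).2 hw])
  exact ⟨ν, hν, fun u => by simp [hνψ]⟩

theorem forall_add_add_mem_imp_eq_zero_iff {E₀ E₁ E₂ : Type*} [AddCommGroup E₀] [Module K E₀]
    [AddCommGroup E₁] [Module K E₁] [AddCommGroup E₂] [Module K E₂] (hB : B.Nondegenerate)
    (hW : ∀ x ∈ W, ∀ y ∈ W, B x y = 0) (hdim : 2 * Module.finrank K W = Module.finrank K V)
    (L₀ : E₀ →ₗ[K] V) (L₁ : E₁ →ₗ[K] V) (L₂ : E₂ →ₗ[K] V)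
    (ℓ₀ : Module.Dual K E₀) (ℓ₁ : Module.Dual K E₁) (ℓ₂ : Module.Dual K E₂) :
    (∀ x₀ x₁ x₂, L₀ x₀ + L₁ x₁ + L₂ x₂ ∈ W → ℓ₀ x₀ + ℓ₁ x₁ + ℓ₂ x₂ = 0) ↔
      ∃ ν ∈ W, (∀ x, ℓ₀ x = B ν (L₀ x)) ∧ (∀ x, ℓ₁ x = B ν (L₁ x)) ∧
        (∀ x, ℓ₂ x = B ν (L₂ x)) := by
  have h := forall_mem_comap_imp_eq_zero_iff hB hW hdim (L₀.coprod (L₁.coprod L₂))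
    (ℓ₀.coprod (ℓ₁.coprod ℓ₂))
  simp only [Prod.forall, coprod_apply, ← add_assoc, map_add] at h
  refine h.trans (exists_congr fun ν => and_congr_right fun _ => ⟨fun hν => ?_, ?_⟩)
  · exact ⟨fun x => by simpa using hν x 0 0, fun x => by simpa using hν 0 x 0,
      fun x => by simpa using hν 0 0 x⟩
  · rintro ⟨h₀, h₁, h₂⟩ x₀ x₁ x₂
    rw [h₀, h₁, h₂]

end LinearMap.BilinForm

theorem Jmat_mul_Jmat (n : ℕ) : Jmat n * Jmat n = -1 := by
  simp only [Jmat, Matrix.fromBlocks_multiply]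
  ext (i|i) (j|j) <;> simp [Matrix.fromBlocks, Matrix.one_apply, eq_comm]

-- `sympForm n x y` unfolds definitionally to `symp n x y`.
def sympForm (n : ℕ) : LinearMap.BilinForm ℝ (Fin n ⊕ Fin n → ℝ) :=
  dotProductBilin ℝ ℝ ∘ₗ (Jmat n).mulVecLin

theorem sympForm_nondegenerate (n : ℕ) : (sympForm n).Nondegenerate := by
  refine .ofSeparatingLeft fun x hx => ?_
  have hJx : Jmat n *ᵥ x = 0 := dotProduct_self_eq_zero.1 (hx (Jmat n *ᵥ x))
  rw [← neg_neg x, ← one_mulVec x, ← neg_mulVec, ← Jmat_mul_Jmat, ← mulVec_mulVec, hJx,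
    mulVec_zero, neg_zero]

theorem symp_mulVec_mulVec {n : ℕ} {Φ : Matrix (Fin n ⊕ Fin n) (Fin n ⊕ Fin n) ℝ}
    (hΦ : Φᵀ * Jmat n * Φ = Jmat n) (a b : Fin n ⊕ Fin n → ℝ) :
    symp n (Φ *ᵥ a) (Φ *ᵥ b) = symp n a b := by
  rw [symp, symp, dotProduct_mulVec, ← mulVec_transpose, mulVec_mulVec, mulVec_mulVec, hΦ]

theorem gApp_comm {n : ℕ} {G : Matrix (Fin n ⊕ Fin n) (Fin n ⊕ Fin n) ℝ} (hG : G.IsSymm)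
    (x y : Fin n ⊕ Fin n → ℝ) : gApp G x y = gApp G y x := by
  rw [gApp, gApp, dotProduct_mulVec, ← mulVec_transpose, hG.eq, dotProduct_comm]

theorem gApp_sub_mulVec_eq_zero_iff {n : ℕ} {G J : Matrix (Fin n ⊕ Fin n) (Fin n ⊕ Fin n) ℝ}
    (hG : G.IsSymm) (hJ : ∀ x y, gApp G (J *ᵥ x) y = symp n x y) (x ν y : Fin n ⊕ Fin n → ℝ) :
    gApp G (x - J *ᵥ ν) y = 0 ↔ gApp G y x = symp n ν y := by
  rw [gApp, sub_dotProduct, ← gApp, ← gApp, hJ, gApp_comm hG, sub_eq_zero]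

theorem ContinuousOn.memLp_restrict_of_isCompact {X E : Type*} [TopologicalSpace X] [T2Space X]
    [MeasurableSpace X] [OpensMeasurableSpace X] {μ : Measure X} [IsFiniteMeasureOnCompacts μ]
    [NormedAddCommGroup E] {f : X → E} {s : Set X} (hf : ContinuousOn f s) (hs : IsCompact s)
    (p : ENNReal) : MemLp f p (μ.restrict s) := by
  have : IsFiniteMeasure (μ.restrict s) := ⟨by simpa using hs.measure_lt_top⟩
  obtain ⟨C, hC⟩ := hs.exists_bound_of_continuousOn hf
  exact .of_bound (hf.aestronglyMeasurable_of_isCompact hs hs.measurableSet) C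
    (ae_restrict_of_forall_mem hs.measurableSet hC)

namespace MeasureTheory

variable {α : Type*} [MeasurableSpace α] {μ : Measure α}

def Lp.integralApplyₗ {E F : Type*} [NormedAddCommGroup E] [NormedSpace ℝ E]
    [NormedAddCommGroup F] [NormedSpace ℝ F] {p : ENNReal} (A : α → E →ₗ[ℝ] F)
    (hA : ∀ u : Lp E p μ, Integrable (fun t => A t (u t)) μ) : Lp E p μ →ₗ[ℝ] F where
  toFun u := ∫ t, A t (u t) ∂μ
  map_add' u v := by
    rw [← integral_add (hA u) (hA v)]
    refine integral_congr_ae ?_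
    filter_upwards [Lp.coeFn_add u v] with t ht
    rw [ht, Pi.add_apply, map_add]
  map_smul' c u := by
    rw [RingHom.id_apply, ← integral_smul]
    refine integral_congr_ae ?_
    filter_upwards [Lp.coeFn_smul c u] with t ht
    rw [ht, Pi.smul_apply, map_smul]

variable {ι κ : Type*} [Fintype ι] [Fintype κ]

theorem integrable_dotProduct {f g : α → κ → ℝ} (hf : MemLp f 2 μ) (hg : MemLp g 2 μ) :
    Integrable (fun t => f t ⬝ᵥ g t) μ :=
  integrable_finsetSum _ fun j _ => (hf.eval j).integrable_mul (hg.eval j)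

variable {Z : α → Matrix ι κ ℝ}

theorem integrable_mulVec (hZ : ∀ i, MemLp (fun t => Z t i) 2 μ) {u : α → κ → ℝ}
    (hu : MemLp u 2 μ) : Integrable (fun t => Z t *ᵥ u t) μ :=
  Integrable.of_eval fun i => integrable_dotProduct (hZ i) hu

theorem memLp_transpose_mulVec (hZ : ∀ i, MemLp (fun t => Z t i) 2 μ) (c : ι → ℝ) :
    MemLp (fun t => (Z t)ᵀ *ᵥ c) 2 μ := by
  have : (fun t => (Z t)ᵀ *ᵥ c) = ∑ i, c i • fun t => Z t i := by
    ext t j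
    simp [mulVec, dotProduct, mul_comm]
  rw [this]
  exact memLp_finsetSum' _ fun i _ => (hZ i).const_smul (c i)

theorem integral_dotProduct_transpose_mulVec (hZ : ∀ i, MemLp (fun t => Z t i) 2 μ)
    {u : α → κ → ℝ} (hu : MemLp u 2 μ) (c : ι → ℝ) :
    ∫ t, u t ⬝ᵥ ((Z t)ᵀ *ᵥ c) ∂μ = c ⬝ᵥ ∫ t, Z t *ᵥ u t ∂μ := by
  simp_rw [dotProduct_mulVec, vecMul_transpose, dotProduct_comm _ c]
  exact ((dotProductBilin ℝ ℝ c).toContinuousLinearMap).integral_comp_comm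
    (integrable_mulVec hZ hu)

theorem forall_integral_dotProduct_eq_iff (v : Lp (κ → ℝ) 2 μ) {g : α → κ → ℝ}
    (hg : MemLp g 2 μ) :
    (∀ u : Lp (κ → ℝ) 2 μ, ∫ t, u t ⬝ᵥ v t ∂μ = ∫ t, u t ⬝ᵥ g t ∂μ) ↔ ∀ᵐ t ∂μ, v t = g t := by
  refine ⟨fun h => ?_, fun h u => integral_congr_ae (h.mono fun t ht => by simp only [ht])⟩
  set w := v - hg.toLp g
  have hw : ∀ᵐ t ∂μ, w t = v t - g t := by
    filter_upwards [Lp.coeFn_sub v (hg.toLp g), hg.coeFn_toLp] with t h₁ h₂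
    rw [h₁, Pi.sub_apply, h₂]
  have hw₂ : ∫ t, w t ⬝ᵥ w t ∂μ = 0 := by
    have hsplit : (fun t => w t ⬝ᵥ w t) =ᵐ[μ] fun t => w t ⬝ᵥ v t - w t ⬝ᵥ g t :=
      hw.mono fun t ht => by simp only [← dotProduct_sub, ← ht]
    rw [integral_congr_ae hsplit, integral_sub
      (integrable_dotProduct (Lp.memLp w) (Lp.memLp v)) (integrable_dotProduct (Lp.memLp w) hg),
      h w, sub_self]
  have hw₀ : ∀ᵐ t ∂μ, w t ⬝ᵥ w t = 0 := (integral_eq_zero_iff_of_nonneg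
    (fun t => Finset.sum_nonneg fun i _ => mul_self_nonneg (w t i))
    (integrable_dotProduct (Lp.memLp w) (Lp.memLp w))).1 hw₂
  filter_upwards [hw, hw₀] with t h₁ h₀
  rwa [dotProduct_self_eq_zero, h₁, sub_eq_zero] at h₀

theorem forall_integral_dotProduct_eq_dotProduct_integral_iff
    (hZ : ∀ i, MemLp (fun t => Z t i) 2 μ) (v : Lp (κ → ℝ) 2 μ) (c : ι → ℝ) :
    (∀ u : Lp (κ → ℝ) 2 μ, ∫ t, u t ⬝ᵥ v t ∂μ = c ⬝ᵥ ∫ t, Z t *ᵥ u t ∂μ) ↔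
      ∀ᵐ t ∂μ, v t = (Z t)ᵀ *ᵥ c := by
  rw [← forall_integral_dotProduct_eq_iff v (memLp_transpose_mulVec hZ c)]
  exact forall_congr' fun u => by rw [integral_dotProduct_transpose_mulVec hZ (Lp.memLp u)]

end MeasureTheory

theorem statement2_general
    (n k n0 n1 : ℕ)
    (μ : Measure ℝ) (hμ : μ = volume.restrict (Set.Icc (0:ℝ) 1))
    (Z : ℝ → Matrix (Fin n ⊕ Fin n) (Fin k) ℝ)
    (hZcont : ContinuousOn Z (Set.Icc 0 1))
    (Z0 : Matrix (Fin n ⊕ Fin n) (Fin n0) ℝ)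
    (Z1 : Matrix (Fin n ⊕ Fin n) (Fin n1) ℝ)
    (Φm : Matrix (Fin n ⊕ Fin n) (Fin n ⊕ Fin n) ℝ)
    (hΦsymp : Φmᵀ * Jmat n * Φm = Jmat n)
    (Vpi : Submodule ℝ ((Fin n ⊕ Fin n) → ℝ))
    (hVpidim : Module.finrank ℝ Vpi = n)
    (hVpiLag : ∀ x ∈ Vpi, ∀ y ∈ Vpi, symp n x y = 0)
    (G0 G1 : Matrix (Fin n ⊕ Fin n) (Fin n ⊕ Fin n) ℝ)
    (hG0 : G0.PosDef) (hG1 : G1.PosDef)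
    (J0 J1 : Matrix (Fin n ⊕ Fin n) (Fin n ⊕ Fin n) ℝ)
    (hJ0 : ∀ x y, gApp G0 (J0 *ᵥ x) y = symp n x y)
    (hJ1 : ∀ x y, gApp G1 (J1 *ᵥ x) y = symp n x y) :
    {v : (Fin n0 → ℝ) × Lp (Fin k → ℝ) 2 μ × (Fin n1 → ℝ) |
      ∀ u : (Fin n0 → ℝ) × Lp (Fin k → ℝ) 2 μ × (Fin n1 → ℝ),
        Z0 *ᵥ u.1 + (∫ t in (0:ℝ)..1, Z t *ᵥ u.2.1 t) + Z1 *ᵥ u.2.2 ∈ Vpi →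
        (∫ t in (0:ℝ)..1, (u.2.1 t) ⬝ᵥ (v.2.1 t))
          + gApp G0 (Z0 *ᵥ u.1) (Z0 *ᵥ v.1)
          + gApp G1 ((Φm * Z1) *ᵥ u.2.2) ((Φm * Z1) *ᵥ v.2.2) = 0}
    =
    {v : (Fin n0 → ℝ) × Lp (Fin k → ℝ) 2 μ × (Fin n1 → ℝ) |
      ∃ ν ∈ Vpi,
        (∀ᵐ t ∂μ, v.2.1 t = (Z t)ᵀ *ᵥ (Jmat n *ᵥ ν)) ∧
        (∀ w : Fin n0 → ℝ, gApp G0 (Z0 *ᵥ v.1 - J0 *ᵥ ν) (Z0 *ᵥ w) = 0) ∧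
        (∀ w : Fin n1 → ℝ,
          gApp G1 ((Φm * Z1) *ᵥ v.2.2 - (J1 * Φm) *ᵥ ν) ((Φm * Z1) *ᵥ w) = 0)} := by
  subst hμ
  have hZ : ∀ i, MemLp (fun t => Z t i) 2 (volume.restrict (Set.Icc (0:ℝ) 1)) := fun i =>
    ((continuous_apply i).comp_continuousOn hZcont).memLp_restrict_of_isCompact isCompact_Icc 2
  have hdim : 2 * Module.finrank ℝ Vpi = Module.finrank ℝ (Fin n ⊕ Fin n → ℝ) := by
    simp [hVpidim, two_mul]
  ext ⟨v₀, v, v₁⟩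
  -- The three functionals are the summands of `⟨·, v⟩`; both sides of `key` agree with the goal
  -- up to unfolding and the order of the conjuncts.
  have key := LinearMap.BilinForm.forall_add_add_mem_imp_eq_zero_iff (sympForm_nondegenerate n)
    hVpiLag hdim Z0.mulVecLin
    (Lp.integralApplyₗ (fun t => (Z t).mulVecLin) fun u => integrable_mulVec hZ (Lp.memLp u))
    Z1.mulVecLin
    ((dotProductBilin ℝ ℝ).flip (G0 *ᵥ Z0 *ᵥ v₀) ∘ₗ Z0.mulVecLin)
    (Lp.integralApplyₗ (fun t => (dotProductBilin ℝ ℝ).flip (v t))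
      fun u => integrable_dotProduct (Lp.memLp u) (Lp.memLp v))
    ((dotProductBilin ℝ ℝ).flip (G1 *ᵥ (Φm * Z1) *ᵥ v₁) ∘ₗ (Φm * Z1).mulVecLin)
  simp only [Set.mem_ofPred_eq, Prod.forall, intervalIntegral.integral_of_le zero_le_one,
    ← integral_Icc_eq_integral_Ioc, add_comm _ (gApp G0 _ _)]
  refine key.trans (exists_congr fun ν => and_congr_right fun _ =>
    and_left_comm.trans (and_congr ?_ (and_congr ?_ ?_)))
  · exact forall_integral_dotProduct_eq_dotProduct_integral_iff hZ v (Jmat n *ᵥ ν)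
  · exact forall_congr' fun w =>
      (gApp_sub_mulVec_eq_zero_iff (isHermitian_iff_isSymm.1 hG0.isHermitian) hJ0 _ _ _).symm
  · have hΦ (w : Fin n1 → ℝ) : symp n (Φm *ᵥ ν) ((Φm * Z1) *ᵥ w) = symp n ν (Z1 *ᵥ w) := by
      rw [← mulVec_mulVec, symp_mulVec_mulVec hΦsymp]
    refine forall_congr' fun w => ?_
    rw [← mulVec_mulVec ν J1 Φm, gApp_sub_mulVec_eq_zero_iff
      (isHermitian_iff_isSymm.1 hG1.isHermitian) hJ1, hΦ]
    rfl

/-- description of the orthogonal complement of `𝓥` in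
`H = ℝ^{n0} × L²([0,1];ℝ^k) × ℝ^{n1}`. -/
theorem statement2
    (n k n0 n1 : ℕ)
    (μ : Measure ℝ) (hμ : μ = volume.restrict (Set.Icc (0:ℝ) 1))
    (Z : ℝ → Matrix (Fin n ⊕ Fin n) (Fin k) ℝ)
    (hZcont : ContinuousOn Z (Set.Icc 0 1))
    (Z0 : Matrix (Fin n ⊕ Fin n) (Fin n0) ℝ) (hZ0inj : Function.Injective Z0.mulVec)
    (Z1 : Matrix (Fin n ⊕ Fin n) (Fin n1) ℝ) (hZ1inj : Function.Injective Z1.mulVec)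
    (Φm : Matrix (Fin n ⊕ Fin n) (Fin n ⊕ Fin n) ℝ)
    (hΦsymp : Φmᵀ * Jmat n * Φm = Jmat n)
    (hΦZ1inj : Function.Injective (Φm * Z1).mulVec)
    (Vpi : Submodule ℝ ((Fin n ⊕ Fin n) → ℝ))
    (hVpidim : Module.finrank ℝ Vpi = n)
    (hVpiLag : ∀ x ∈ Vpi, ∀ y ∈ Vpi, symp n x y = 0)
    (G0 G1 : Matrix (Fin n ⊕ Fin n) (Fin n ⊕ Fin n) ℝ)
    (hG0 : G0.PosDef) (hG1 : G1.PosDef)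
    (J0 J1 : Matrix (Fin n ⊕ Fin n) (Fin n ⊕ Fin n) ℝ)
    (hJ0 : ∀ x y, gApp G0 (J0 *ᵥ x) y = symp n x y) (hJ0unit : IsUnit J0)
    (hJ1 : ∀ x y, gApp G1 (J1 *ᵥ x) y = symp n x y) (hJ1unit : IsUnit J1)
    -- surjectivity of `u ↦ ∫₀¹ Z_t u_t dt` composed with the quotient map `ℝ^{2n} → ℝ^{2n}/Π`
    (hsurj : ∀ w : (Fin n ⊕ Fin n) → ℝ, ∃ uc : Lp (Fin k → ℝ) 2 μ,
      (∫ t in (0:ℝ)..1, Z t *ᵥ uc t) - w ∈ Vpi) :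
    {v : (Fin n0 → ℝ) × Lp (Fin k → ℝ) 2 μ × (Fin n1 → ℝ) |
      ∀ u : (Fin n0 → ℝ) × Lp (Fin k → ℝ) 2 μ × (Fin n1 → ℝ),
        Z0 *ᵥ u.1 + (∫ t in (0:ℝ)..1, Z t *ᵥ u.2.1 t) + Z1 *ᵥ u.2.2 ∈ Vpi →
        (∫ t in (0:ℝ)..1, (u.2.1 t) ⬝ᵥ (v.2.1 t))
          + gApp G0 (Z0 *ᵥ u.1) (Z0 *ᵥ v.1)
          + gApp G1 ((Φm * Z1) *ᵥ u.2.2) ((Φm * Z1) *ᵥ v.2.2) = 0}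
    =
    {v : (Fin n0 → ℝ) × Lp (Fin k → ℝ) 2 μ × (Fin n1 → ℝ) |
      ∃ ν ∈ Vpi,
        (∀ᵐ t ∂μ, v.2.1 t = (Z t)ᵀ *ᵥ (Jmat n *ᵥ ν)) ∧
        (∀ w : Fin n0 → ℝ, gApp G0 (Z0 *ᵥ v.1 - J0 *ᵥ ν) (Z0 *ᵥ w) = 0) ∧
        (∀ w : Fin n1 → ℝ,
          gApp G1 ((Φm * Z1) *ᵥ v.2.2 - (J1 * Φm) *ᵥ ν) ((Φm * Z1) *ᵥ w) = 0)} :=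
  statement2_general n k n0 n1 μ hμ Z hZcont Z0 Z1 Φm hΦsymp Vpi hVpidim hVpiLag G0 G1 hG0 hG1 J0 J1
    hJ0 hJ1
end
end

section
/- The matrix function D(t) := [[∫₀ᵗ Y_τ X_τᵀ dτ, 0],[∫₀ᵗ ∫₀^τ X_τ Z_τᵀ J Z_r X_rᵀ dr dτ, −∫₀ᵗ X_τ Y_τᵀ dτ]] satisfies D(0) = 0 and D'(t) = [[0, 0],[X_t X_tᵀ, 0]] · D(t) + [[Y_t X_tᵀ, 0],[0, −X_t Y_tᵀ]] · Φ⁰(t) for all t ∈ ℝ. (D is the derivative at s = 0 of the fundamental solution of the rescaled Jacobi equation.) -/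
/-!
Since `Z_τᵀ J Z_r = X_τᵀ Y_r - Y_τᵀ X_r`, the inner integral in the lower-left block of `D` is
`X_τ X_τᵀ ∫₀^τ Y Xᵀ - X_τ Y_τᵀ ∫₀^τ X Xᵀ`, which is exactly the lower-left block of the
right-hand side at `τ`; every block of `D` is then differentiated by the fundamental theorem
of calculus.
-/

open Matrix intervalIntegral

variable {m p q : Type*}

-- Entrywise, because `Matrix` carries no global normed-space instance.
noncomputable def matrixPrimitive (f : ℝ → Matrix m q ℝ) (t : ℝ) : Matrix m q ℝ :=
  Matrix.of fun i j => ∫ τ in (0:ℝ)..t, f τ i j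

@[simp]
lemma matrixPrimitive_zero (f : ℝ → Matrix m q ℝ) : matrixPrimitive f 0 = 0 := by
  ext i j
  simp [matrixPrimitive]

lemma hasDerivAt_matrixPrimitive_apply {f : ℝ → Matrix m q ℝ} (hf : Continuous f) (t : ℝ)
    (i : m) (j : q) : HasDerivAt (fun s => matrixPrimitive f s i j) (f t i j) t :=
  ((hf.matrix_elem i j).integral_hasStrictDerivAt 0 t).hasDerivAt

lemma continuous_matrixPrimitive {f : ℝ → Matrix m q ℝ} (hf : Continuous f) :
    Continuous (matrixPrimitive f) :=
  continuous_matrix fun i j => continuous_iff_continuousAt.2 fun t =>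
    (hasDerivAt_matrixPrimitive_apply hf t i j).continuousAt

lemma matrixPrimitive_sub {f g : ℝ → Matrix m q ℝ} (hf : Continuous f) (hg : Continuous g)
    (t : ℝ) :
    matrixPrimitive (fun τ => f τ - g τ) t = matrixPrimitive f t - matrixPrimitive g t := by
  ext i j
  exact integral_sub ((hf.matrix_elem i j).intervalIntegrable 0 t)
    ((hg.matrix_elem i j).intervalIntegrable 0 t)

lemma matrixPrimitive_mul_left [Fintype p] (M : Matrix m p ℝ) {f : ℝ → Matrix p q ℝ}
    (hf : Continuous f) (t : ℝ) :
    matrixPrimitive (fun τ => M * f τ) t = M * matrixPrimitive f t := by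
  ext i j
  simp only [matrixPrimitive, of_apply, mul_apply]
  rw [integral_finsetSum fun l _ =>
    ((hf.matrix_elem l j).const_mul (M i l)).intervalIntegrable 0 t]
  simp only [integral_const_mul]

lemma hasDerivAt_fromBlocks_apply {m₁ m₂ n₁ n₂ : Type*}
    {A : ℝ → Matrix m₁ n₁ ℝ} {B : ℝ → Matrix m₁ n₂ ℝ} {C : ℝ → Matrix m₂ n₁ ℝ}
    {D : ℝ → Matrix m₂ n₂ ℝ} {A' : Matrix m₁ n₁ ℝ} {B' : Matrix m₁ n₂ ℝ}
    {C' : Matrix m₂ n₁ ℝ} {D' : Matrix m₂ n₂ ℝ} {t : ℝ}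
    (hA : ∀ i j, HasDerivAt (fun s => A s i j) (A' i j) t)
    (hB : ∀ i j, HasDerivAt (fun s => B s i j) (B' i j) t)
    (hC : ∀ i j, HasDerivAt (fun s => C s i j) (C' i j) t)
    (hD : ∀ i j, HasDerivAt (fun s => D s i j) (D' i j) t) :
    ∀ i j, HasDerivAt (fun s => fromBlocks (A s) (B s) (C s) (D s) i j)
      (fromBlocks A' B' C' D' i j) t := by
  rintro (i | i) (j | j)
  exacts [hA i j, hB i j, hC i j, hD i j]

lemma fromRows_transpose_mul_J_mul_fromRows {R n k l : Type*} [CommRing R] [Fintype n]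
    [DecidableEq n] (A B : Matrix n k R) (C D : Matrix n l R) :
    (fromRows A B)ᵀ * J n R * fromRows C D = Bᵀ * C - Aᵀ * D := by
  rw [J, transpose_fromRows, fromCols_mul_fromBlocks, fromCols_mul_fromRows]
  simp [sub_eq_add_neg, add_comm]

lemma matrixPrimitive_symplectic_pairing {n k : Type*} [Fintype n] [DecidableEq n] [Fintype k]
    {X Y : ℝ → Matrix n k ℝ} (hX : Continuous X) (hY : Continuous Y) (s t : ℝ) :
    matrixPrimitive
        (fun r => X s * (fromRows (Y s) (X s))ᵀ * J n ℝ * fromRows (Y r) (X r) * (X r)ᵀ) t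
      = X s * (X s)ᵀ * matrixPrimitive (fun r => Y r * (X r)ᵀ) t
        - X s * (Y s)ᵀ * matrixPrimitive (fun r => X r * (X r)ᵀ) t := by
  have hYX : Continuous fun r => Y r * (X r)ᵀ := hY.matrix_mul hX.matrix_transpose
  have hXX : Continuous fun r => X r * (X r)ᵀ := hX.matrix_mul hX.matrix_transpose
  have integrand : ∀ r, X s * (fromRows (Y s) (X s))ᵀ * J n ℝ * fromRows (Y r) (X r) * (X r)ᵀ
      = X s * (X s)ᵀ * (Y r * (X r)ᵀ) - X s * (Y s)ᵀ * (X r * (X r)ᵀ) := by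
    intro r
    rw [Matrix.mul_assoc (X s), Matrix.mul_assoc (X s), fromRows_transpose_mul_J_mul_fromRows]
    simp only [Matrix.mul_sub, Matrix.sub_mul, Matrix.mul_assoc]
  simp only [integrand]
  rw [matrixPrimitive_sub (continuous_const.matrix_mul hYX) (continuous_const.matrix_mul hXX),
    matrixPrimitive_mul_left _ hYX, matrixPrimitive_mul_left _ hXX]

/-- `D(t) = [[∫₀ᵗ YXᵀ, 0],[∫₀ᵗ∫₀^τ X Zᵀ J Z Xᵀ, −∫₀ᵗ XYᵀ]]` satisfies
`D(0) = 0` and `D' = [[0,0],[XXᵀ,0]] D + [[YXᵀ,0],[0,−XYᵀ]] Φ⁰`. -/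
theorem statement5 (n k : ℕ)
    (X Y : ℝ → Matrix (Fin n) (Fin k) ℝ) (hX : Continuous X) (hY : Continuous Y)
    (Z : ℝ → Matrix (Fin n ⊕ Fin n) (Fin k) ℝ)
    (hZ : ∀ t, Z t = Matrix.fromRows (Y t) (X t))
    (J : Matrix (Fin n ⊕ Fin n) (Fin n ⊕ Fin n) ℝ)
    (hJ : J = Matrix.fromBlocks 0 (-1) 1 0)
    (Φ₀ D : ℝ → Matrix (Fin n ⊕ Fin n) (Fin n ⊕ Fin n) ℝ)
    (hΦ₀ : ∀ t, Φ₀ t = Matrix.fromBlocks 1 0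
      (Matrix.of fun i j => ∫ τ in (0:ℝ)..t, (X τ * (X τ)ᵀ) i j) 1)
    (hD : ∀ t, D t = Matrix.fromBlocks
      (Matrix.of fun i j => ∫ τ in (0:ℝ)..t, (Y τ * (X τ)ᵀ) i j)
      0
      (Matrix.of fun i j => ∫ τ in (0:ℝ)..t, ∫ r in (0:ℝ)..τ,
        (X τ * (Z τ)ᵀ * J * Z r * (X r)ᵀ) i j)
      (-(Matrix.of fun i j => ∫ τ in (0:ℝ)..t, (X τ * (Y τ)ᵀ) i j))) :
    D 0 = 0 ∧
    ∀ t, ∀ i j, HasDerivAt (fun τ => D τ i j)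
      ((Matrix.fromBlocks 0 0 (X t * (X t)ᵀ) 0 * D t
          + Matrix.fromBlocks (Y t * (X t)ᵀ) 0 0 (-(X t * (Y t)ᵀ)) * Φ₀ t :
        Matrix (Fin n ⊕ Fin n) (Fin n ⊕ Fin n) ℝ) i j) t := by
  obtain rfl : Z = fun t => fromRows (Y t) (X t) := funext hZ
  obtain rfl : J = Matrix.J (Fin n) ℝ := hJ
  have hYX : Continuous fun τ => Y τ * (X τ)ᵀ := hY.matrix_mul hX.matrix_transpose
  have hXY : Continuous fun τ => X τ * (Y τ)ᵀ := hX.matrix_mul hY.matrix_transpose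
  have hXX : Continuous fun τ => X τ * (X τ)ᵀ := hX.matrix_mul hX.matrix_transpose
  have hD' : D = fun t => fromBlocks (matrixPrimitive (fun τ => Y τ * (X τ)ᵀ) t) 0
      (matrixPrimitive (fun τ => matrixPrimitive (fun r =>
        X τ * (fromRows (Y τ) (X τ))ᵀ * J (Fin n) ℝ * fromRows (Y r) (X r) * (X r)ᵀ) τ) t)
      (-matrixPrimitive (fun τ => X τ * (Y τ)ᵀ) t) := funext hD
  simp only [matrixPrimitive_symplectic_pairing hX hY] at hD'
  have hΦ₀' : Φ₀ = fun t => fromBlocks 1 0 (matrixPrimitive (fun τ => X τ * (X τ)ᵀ) t) 1 :=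
    funext hΦ₀
  refine ⟨by simp [hD'], fun t => ?_⟩
  have rhs : fromBlocks 0 0 (X t * (X t)ᵀ) 0 * D t
      + fromBlocks (Y t * (X t)ᵀ) 0 0 (-(X t * (Y t)ᵀ)) * Φ₀ t
      = fromBlocks (Y t * (X t)ᵀ) 0
        (X t * (X t)ᵀ * matrixPrimitive (fun r => Y r * (X r)ᵀ) t
          - X t * (Y t)ᵀ * matrixPrimitive (fun r => X r * (X r)ᵀ) t)
        (-(X t * (Y t)ᵀ)) := by
    rw [hΦ₀', hD', fromBlocks_multiply, fromBlocks_multiply, fromBlocks_add]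
    simp [sub_eq_add_neg]
  have hC : Continuous fun τ => X τ * (X τ)ᵀ * matrixPrimitive (fun r => Y r * (X r)ᵀ) τ
      - X τ * (Y τ)ᵀ * matrixPrimitive (fun r => X r * (X r)ᵀ) τ :=
    (hXX.matrix_mul (continuous_matrixPrimitive hYX)).sub
      (hXY.matrix_mul (continuous_matrixPrimitive hXX))
  rw [rhs, hD']
  exact hasDerivAt_fromBlocks_apply (hasDerivAt_matrixPrimitive_apply hYX t)
    (fun _ _ => hasDerivAt_const _ _) (hasDerivAt_matrixPrimitive_apply hC t)
    (fun i j => (hasDerivAt_matrixPrimitive_apply hXY t i j).neg)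
end

section
/- If Γ and G0 + G1 are invertible and L := (G0 + G1)⁻¹, then the 2n×2n matrix [[G1Γ, G0 + G1 + G1ΓG0],[Γ, ΓG0]] is invertible with inverse [[−G0·L, Γ⁻¹ + G0·L·G1],[L, −L·G1]]. -/
open Matrix

/-- if `Γ` and `G0 + G1` are invertible and `L := (G0+G1)⁻¹`, then
`[[G1Γ, G0+G1+G1ΓG0],[Γ, ΓG0]]` is invertible with inverse
`[[−G0·L, Γ⁻¹ + G0·L·G1],[L, −L·G1]]`. -/
theorem statement8 (n : ℕ) (G0 G1 Γ : Matrix (Fin n) (Fin n) ℝ)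
    (hΓ : IsUnit Γ) (hG : IsUnit (G0 + G1))
    (L : Matrix (Fin n) (Fin n) ℝ) (hL : L = (G0 + G1)⁻¹) :
    Matrix.fromBlocks (G1 * Γ) (G0 + G1 + G1 * Γ * G0) Γ (Γ * G0) *
        Matrix.fromBlocks (-(G0 * L)) (Γ⁻¹ + G0 * L * G1) L (-(L * G1)) = 1 ∧
    Matrix.fromBlocks (-(G0 * L)) (Γ⁻¹ + G0 * L * G1) L (-(L * G1)) *
        Matrix.fromBlocks (G1 * Γ) (G0 + G1 + G1 * Γ * G0) Γ (Γ * G0) = 1 := by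
  have hGd := (Matrix.isUnit_iff_isUnit_det _).mp hG
  have hΓd := (Matrix.isUnit_iff_isUnit_det _).mp hΓ
  have h3 : Γ * Γ⁻¹ = 1 := Matrix.mul_nonsing_inv _ hΓd
  have h4 : Γ⁻¹ * Γ = 1 := Matrix.nonsing_inv_mul _ hΓd
  set K := G0 + G1 with hKdef
  have hK1 : K * L = 1 := by rw [hL]; exact Matrix.mul_nonsing_inv _ hGd
  have hK2 : L * K = 1 := by rw [hL]; exact Matrix.nonsing_inv_mul _ hGd
  constructor
  · rw [Matrix.fromBlocks_multiply, ← Matrix.fromBlocks_one]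
    rw [Matrix.fromBlocks_inj]
    refine ⟨?_, ?_, ?_, ?_⟩
    · rw [add_mul, hK1]; noncomm_ring
    · rw [mul_add, mul_neg, add_mul, mul_assoc G1 Γ Γ⁻¹, h3,
        ← Matrix.mul_assoc K L G1, hK1]; noncomm_ring
    · noncomm_ring
    · rw [mul_add, h3]; noncomm_ring
  · rw [Matrix.fromBlocks_multiply, ← Matrix.fromBlocks_one]
    rw [Matrix.fromBlocks_inj]
    refine ⟨?_, ?_, ?_, ?_⟩
    · rw [add_mul, h4]; noncomm_ring
    · rw [neg_mul, mul_add, add_mul, Matrix.mul_assoc G0 L K, hK2,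
        ← Matrix.mul_assoc Γ⁻¹ Γ G0, h4]; noncomm_ring
    · noncomm_ring
    · rw [mul_add, hK2]; noncomm_ring
end

section
/- Let s ∈ ℝ, s ≠ 0. If Φ : ℝ → Mat_{2n}(ℝ) is differentiable with Φ'(t) = (δˢ Z_t)(δˢ Z_t)ᵀ J Φ(t) for all t and Φ(0) = I, then Ψ(t) := δ_s · Φ(t) · δ_{1/s} satisfies Ψ'(t) = s · Z_t Z_tᵀ J Ψ(t) for all t and Ψ(0) = I. -/
/-!
Since `δˢ` is symmetric, `δ_s δˢ = s • 1` and `δˢ J = J δ_s`, conjugation by `δ_s` carries the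
generator `(δˢ Z)(δˢ Z)ᵀ J` to `s • Z Zᵀ J`; differentiation commutes with multiplication by
constant matrices, and `δ_s δ_{1/s} = 1` gives the initial value.
-/

open Matrix

noncomputable section

lemma hasDerivAt_mul_mul_apply {l m n p : Type*} [Fintype m] [Fintype n]
    (L : Matrix l m ℝ) (R : Matrix n p ℝ) {Φ : ℝ → Matrix m n ℝ} {D : Matrix m n ℝ} {t : ℝ}
    (h : ∀ i j, HasDerivAt (fun τ => Φ τ i j) (D i j) t) (i : l) (j : p) :
    HasDerivAt (fun τ => (L * Φ τ * R) i j) ((L * D * R) i j) t := by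
  have hsum : HasDerivAt (fun τ => ∑ x, ∑ a, L i a * Φ τ a x * R x j)
      (∑ x, ∑ a, L i a * D a x * R x j) t :=
    .fun_sum fun x _ => .fun_sum fun a _ => ((h a x).const_mul _).mul_const _
  simpa only [Matrix.mul_apply, Finset.sum_mul] using hsum

lemma mul_generator_mul_eq_smul {m k α : Type*} [Fintype m] [DecidableEq m] [Fintype k]
    [CommRing α] {D U J : Matrix m m α} {s : α}
    (hDU : D * U = s • 1) (hUJ : U * J = J * D) (hU : Uᵀ = U)
    (Z : Matrix m k α) (Φ D' : Matrix m m α) :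
    D * ((U * Z) * (U * Z)ᵀ * J * Φ) * D' = s • (Z * Zᵀ * J) * (D * Φ * D') := by
  have hUJ' : ∀ X, U * (J * X) = J * (D * X) := fun X => by
    rw [← Matrix.mul_assoc, hUJ, Matrix.mul_assoc]
  have hDU' : ∀ X, D * (U * X) = s • X := fun X => by
    rw [← Matrix.mul_assoc, hDU, Matrix.smul_mul, Matrix.one_mul]
  rw [Matrix.transpose_mul, hU]
  simp only [Matrix.mul_assoc, Matrix.smul_mul]
  rw [hUJ', hDU']

section Dilations

variable {n α : Type*} [DecidableEq n] [CommRing α]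

/-- `δʳ` of the paper. -/
def dilationUpper (r : α) : Matrix (n ⊕ n) (n ⊕ n) α := fromBlocks (r • 1) 0 0 1

/-- `δ_r` of the paper. -/
def dilationLower (r : α) : Matrix (n ⊕ n) (n ⊕ n) α := fromBlocks 1 0 0 (r • 1)

lemma dilationUpper_transpose (r : α) :
    (dilationUpper r : Matrix (n ⊕ n) (n ⊕ n) α)ᵀ = dilationUpper r := by
  simp [dilationUpper, fromBlocks_transpose]

lemma dilationLower_mul_dilationUpper [Fintype n] (r : α) :
    (dilationLower r * dilationUpper r : Matrix (n ⊕ n) (n ⊕ n) α) = r • 1 := by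
  rw [dilationLower, dilationUpper, fromBlocks_multiply, ← fromBlocks_one, fromBlocks_smul]
  simp

lemma dilationUpper_mul_J [Fintype n] (r : α) :
    dilationUpper r * J n α = J n α * dilationLower r := by
  rw [dilationUpper, dilationLower, J, fromBlocks_multiply, fromBlocks_multiply]
  simp

lemma dilationLower_mul_dilationLower [Fintype n] (r q : α) :
    (dilationLower r * dilationLower q : Matrix (n ⊕ n) (n ⊕ n) α) = dilationLower (r * q) := by
  rw [dilationLower, dilationLower, dilationLower, fromBlocks_multiply]
  simp [smul_smul, mul_comm]

end Dilations

theorem statement12_general (n k : ℕ)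
    (Z : ℝ → Matrix (Fin n ⊕ Fin n) (Fin k) ℝ)
    (s : ℝ) (hs : s ≠ 0)
    (J : Matrix (Fin n ⊕ Fin n) (Fin n ⊕ Fin n) ℝ)
    (hJ : J = Matrix.fromBlocks 0 (-1) 1 0)
    (δup δlow : ℝ → Matrix (Fin n ⊕ Fin n) (Fin n ⊕ Fin n) ℝ)
    (hδup : ∀ r, δup r = Matrix.fromBlocks (r • (1 : Matrix (Fin n) (Fin n) ℝ)) 0 0 1)
    (hδlow : ∀ r, δlow r = Matrix.fromBlocks 1 0 0 (r • (1 : Matrix (Fin n) (Fin n) ℝ)))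
    (Φ : ℝ → Matrix (Fin n ⊕ Fin n) (Fin n ⊕ Fin n) ℝ)
    (hΦ0 : Φ 0 = 1)
    (hΦd : ∀ t i j, HasDerivAt (fun τ => Φ τ i j)
      (((δup s * Z t) * (δup s * Z t)ᵀ * J * Φ t) i j) t)
    (Ψ : ℝ → Matrix (Fin n ⊕ Fin n) (Fin n ⊕ Fin n) ℝ)
    (hΨ : ∀ t, Ψ t = δlow s * Φ t * δlow (1 / s)) :
    Ψ 0 = 1 ∧
    ∀ t i j, HasDerivAt (fun τ => Ψ τ i j)
      ((s • (Z t * (Z t)ᵀ * J) * Ψ t) i j) t := by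
  obtain rfl : δup = dilationUpper := funext hδup
  obtain rfl : δlow = dilationLower := funext hδlow
  obtain rfl : Ψ = fun t => dilationLower s * Φ t * dilationLower (1 / s) := funext hΨ
  obtain rfl : J = Matrix.J (Fin n) ℝ := hJ
  refine ⟨?_, fun t i j => ?_⟩ <;> beta_reduce
  · rw [hΦ0, Matrix.mul_one, dilationLower_mul_dilationLower, mul_one_div_cancel hs]
    simp [dilationLower]
  · rw [← mul_generator_mul_eq_smul (dilationLower_mul_dilationUpper s) (dilationUpper_mul_J s)
      (dilationUpper_transpose s)]
    exact hasDerivAt_mul_mul_apply _ _ (hΦd t) i j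

/-- if `Φ` solves `Φ' = (δˢZ)(δˢZ)ᵀ J Φ`, `Φ(0) = I`, then
`Ψ(t) = δ_s Φ(t) δ_{1/s}` solves `Ψ' = s·ZZᵀJ Ψ`, `Ψ(0) = I`. -/
theorem statement12 (n k : ℕ)
    (Z : ℝ → Matrix (Fin n ⊕ Fin n) (Fin k) ℝ) (hZ : Continuous Z)
    (s : ℝ) (hs : s ≠ 0)
    (J : Matrix (Fin n ⊕ Fin n) (Fin n ⊕ Fin n) ℝ)
    (hJ : J = Matrix.fromBlocks 0 (-1) 1 0)
    (δup δlow : ℝ → Matrix (Fin n ⊕ Fin n) (Fin n ⊕ Fin n) ℝ)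
    (hδup : ∀ r, δup r = Matrix.fromBlocks (r • (1 : Matrix (Fin n) (Fin n) ℝ)) 0 0 1)
    (hδlow : ∀ r, δlow r = Matrix.fromBlocks 1 0 0 (r • (1 : Matrix (Fin n) (Fin n) ℝ)))
    (Φ : ℝ → Matrix (Fin n ⊕ Fin n) (Fin n ⊕ Fin n) ℝ)
    (hΦ0 : Φ 0 = 1)
    (hΦd : ∀ t i j, HasDerivAt (fun τ => Φ τ i j)
      (((δup s * Z t) * (δup s * Z t)ᵀ * J * Φ t) i j) t)
    (Ψ : ℝ → Matrix (Fin n ⊕ Fin n) (Fin n ⊕ Fin n) ℝ)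
    (hΨ : ∀ t, Ψ t = δlow s * Φ t * δlow (1 / s)) :
    Ψ 0 = 1 ∧
    ∀ t i j, HasDerivAt (fun τ => Ψ τ i j)
      ((s • (Z t * (Z t)ᵀ * J) * Ψ t) i j) t :=
  statement12_general n k Z s hs J hJ δup δlow hδup hδlow Φ hΦ0 hΦd Ψ hΨ
end
end

section
/- For every s ∈ ℝ and every x ∈ ℝ^{2n}: σ(Ψ(s,1)x, ∂ₛΨ(s,1)x) = ∫₀¹ ‖Z_tᵀ J Ψ(s,t) x‖² dt; in particular this quantity is nonnegative. -/
/-!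
Put `g(t) = σ(Ψ(s,t)x, ∂ₛΨ(s,t)x)`. Since `Ψ(r,0) = I` for every `r`, `∂ₛΨ(s,0) = 0` and `g(0) = 0`.
With `M = ZZᵀJ`, `a = Ψ(s,·)x` solves `a' = sMa`, and by symmetry of second derivatives
`b = ∂ₛΨ(s,·)x` solves `b' = Ma + sMb`. As `Jᵀ = -J`, the two terms of `g'` carrying the factor `s`
cancel, leaving `g' = ⟨JΨx, ZZᵀJΨx⟩ = ‖ZᵀJΨx‖²`; integrate from `0` to `1`.
-/

open Matrix

section MixedPartials

variable {F : Type*} [NormedAddCommGroup F] [NormedSpace ℝ F]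

lemma HasFDerivAt.hasDerivAt_comp_prodMk_left {f : ℝ × ℝ → F} {f' : ℝ × ℝ →L[ℝ] F} {r τ : ℝ}
    (h : HasFDerivAt f f' (r, τ)) : HasDerivAt (fun r => f (r, τ)) (f' (1, 0)) r :=
  h.comp_hasDerivAt r ((hasDerivAt_id r).prodMk (hasDerivAt_const r τ))

lemma HasFDerivAt.hasDerivAt_comp_prodMk_right {f : ℝ × ℝ → F} {f' : ℝ × ℝ →L[ℝ] F} {r τ : ℝ}
    (h : HasFDerivAt f f' (r, τ)) : HasDerivAt (fun τ => f (r, τ)) (f' (0, 1)) τ :=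
  h.comp_hasDerivAt τ ((hasDerivAt_const τ r).prodMk (hasDerivAt_id τ))

theorem ContDiff.hasDerivAt_deriv_fst {f A : ℝ × ℝ → F} (hf : ContDiff ℝ 2 f)
    (hA : ∀ r τ, HasDerivAt (fun τ => f (r, τ)) (A (r, τ)) τ) (s t : ℝ) :
    HasDerivAt (fun τ => deriv (fun r => f (r, τ)) s) (deriv (fun r => A (r, t)) s) t := by
  set D := fderiv ℝ f
  have hD : ∀ p, HasFDerivAt f (D p) p := fun p => (hf.differentiable two_ne_zero p).hasFDerivAt
  have hD2 : HasFDerivAt D (fderiv ℝ D (s, t)) (s, t) :=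
    ((hf.fderiv_right (by norm_num)).differentiable one_ne_zero (s, t)).hasFDerivAt
  have h_fst : ∀ τ, deriv (fun r => f (r, τ)) s = D (s, τ) (1, 0) := fun τ =>
    (hD (s, τ)).hasDerivAt_comp_prodMk_left.deriv
  have h_snd : ∀ r τ, A (r, τ) = D (r, τ) (0, 1) := fun r τ =>
    (hA r τ).unique (hD (r, τ)).hasDerivAt_comp_prodMk_right
  have h_ts : HasDerivAt (fun τ => D (s, τ) (1, 0)) (fderiv ℝ D (s, t) (0, 1) (1, 0)) t := by
    simpa using hD2.hasDerivAt_comp_prodMk_right.clm_apply (hasDerivAt_const t _)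
  have h_st : HasDerivAt (fun r => D (r, t) (0, 1)) (fderiv ℝ D (s, t) (1, 0) (0, 1)) s := by
    simpa using hD2.hasDerivAt_comp_prodMk_left.clm_apply (hasDerivAt_const s _)
  simp only [h_fst, h_snd, h_st.deriv]
  rwa [← hf.contDiffAt.isSymmSndFDerivAt (by simp) (0, 1) (1, 0)]

end MixedPartials

section MatrixCalculus

variable {ι κ μ : Type*} [Fintype κ] {t : ℝ}

lemma hasDerivAt_matrix_mul_apply {A : ℝ → Matrix ι κ ℝ} {B : ℝ → Matrix κ μ ℝ}
    {A' : Matrix ι κ ℝ} {B' : Matrix κ μ ℝ}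
    (hA : ∀ i l, HasDerivAt (fun τ => A τ i l) (A' i l) t)
    (hB : ∀ l j, HasDerivAt (fun τ => B τ l j) (B' l j) t) (i : ι) (j : μ) :
    HasDerivAt (fun τ => (A τ * B τ) i j) ((A' * B t + A t * B') i j) t := by
  simp only [mul_apply, Matrix.add_apply, ← Finset.sum_add_distrib]
  exact HasDerivAt.fun_sum fun l _ => (hA i l).fun_mul (hB l j)

lemma hasDerivAt_mulVec {A : ℝ → Matrix ι κ ℝ} {A' : Matrix ι κ ℝ}
    (hA : ∀ i l, HasDerivAt (fun τ => A τ i l) (A' i l) t) (x : κ → ℝ) :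
    HasDerivAt (fun τ => A τ *ᵥ x) (A' *ᵥ x) t :=
  hasDerivAt_pi.2 fun i => by
    simp only [mulVec, dotProduct]
    exact HasDerivAt.fun_sum fun l _ => (hA i l).mul_const (x l)

lemma HasDerivAt.const_mulVec (A : Matrix ι κ ℝ) {w : ℝ → κ → ℝ} {w' : κ → ℝ}
    (hw : HasDerivAt w w' t) : HasDerivAt (fun τ => A *ᵥ w τ) (A *ᵥ w') t :=
  hasDerivAt_pi.2 fun i => by
    simp only [mulVec, dotProduct]
    exact HasDerivAt.fun_sum fun l _ => (hasDerivAt_pi.1 hw l).const_mul (A i l)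

lemma HasDerivAt.dotProduct {u v : ℝ → κ → ℝ} {u' v' : κ → ℝ}
    (hu : HasDerivAt u u' t) (hv : HasDerivAt v v' t) :
    HasDerivAt (fun τ => u τ ⬝ᵥ v τ) (u' ⬝ᵥ v t + u t ⬝ᵥ v') t := by
  simp only [_root_.dotProduct, ← Finset.sum_add_distrib]
  exact HasDerivAt.fun_sum fun i _ => (hasDerivAt_pi.1 hu i).mul (hasDerivAt_pi.1 hv i)

lemma hasDerivAt_deriv_fst_of_linear_ode [Fintype ι] {Ψ : ℝ × ℝ → Matrix ι ι ℝ}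
    {M : ℝ → Matrix ι ι ℝ}
    (hC2 : ∀ i j, ContDiff ℝ 2 fun p : ℝ × ℝ => Ψ p i j)
    (hode : ∀ r τ, ∀ i j, HasDerivAt (fun τ => Ψ (r, τ) i j) ((r • M τ * Ψ (r, τ)) i j) τ)
    {s : ℝ} {Ψs : ℝ → Matrix ι ι ℝ}
    (hΨs : ∀ τ, Ψs τ = of fun i j => deriv (fun r => Ψ (r, τ) i j) s)
    (t : ℝ) (i j : ι) :
    HasDerivAt (fun τ => Ψs τ i j) ((M t * Ψ (s, t) + s • M t * Ψs t) i j) t := by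
  have hΨ_deriv_fst : ∀ l j, HasDerivAt (fun r => Ψ (r, t) l j) (Ψs t l j) s := fun l j => by
    simpa [hΨs] using (((hC2 l j).differentiable two_ne_zero (s, t)).hasFDerivAt
      |>.hasDerivAt_comp_prodMk_left).differentiableAt.hasDerivAt
  have h_ode_fst : HasDerivAt (fun r => (r • M t * Ψ (r, t)) i j)
      ((M t * Ψ (s, t) + s • M t * Ψs t) i j) s :=
    hasDerivAt_matrix_mul_apply (fun i l => hasDerivAt_mul_const _) hΨ_deriv_fst i j
  rw [← h_ode_fst.deriv]
  simpa only [hΨs, of_apply] using (hC2 i j).hasDerivAt_deriv_fst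
    (A := fun p => (p.1 • M p.2 * Ψ p) i j) (fun r τ => hode r τ i j) s t

end MatrixCalculus

section Symplectic

variable {ι κ : Type*} [Fintype ι] [Fintype κ]

lemma dotProduct_mulVec_mul_transpose_mul (J : Matrix ι ι ℝ) (Z : Matrix ι κ ℝ) (a b : ι → ℝ) :
    (J *ᵥ a) ⬝ᵥ ((Z * Zᵀ * J) *ᵥ b) = (Zᵀ *ᵥ (J *ᵥ a)) ⬝ᵥ (Zᵀ *ᵥ (J *ᵥ b)) := by
  rw [← mulVec_mulVec, ← mulVec_mulVec, dotProduct_mulVec, ← mulVec_transpose]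

lemma mulVec_dotProduct_of_transpose_eq_neg {J : Matrix ι ι ℝ} (hJ : Jᵀ = -J) (a b : ι → ℝ) :
    (J *ᵥ a) ⬝ᵥ b = -((J *ᵥ b) ⬝ᵥ a) := by
  rw [dotProduct_comm, dotProduct_mulVec, ← mulVec_transpose, hJ, neg_mulVec, neg_dotProduct]

lemma hasDerivAt_symplectic_pairing {J : Matrix ι ι ℝ} (hJ : Jᵀ = -J) (Z : Matrix ι κ ℝ) (s : ℝ)
    {a b : ℝ → ι → ℝ} {t : ℝ} (ha : HasDerivAt a ((s • (Z * Zᵀ * J)) *ᵥ a t) t)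
    (hb : HasDerivAt b ((Z * Zᵀ * J) *ᵥ a t + (s • (Z * Zᵀ * J)) *ᵥ b t) t) :
    HasDerivAt (fun τ => (J *ᵥ a τ) ⬝ᵥ b τ) ((Zᵀ *ᵥ (J *ᵥ a t)) ⬝ᵥ (Zᵀ *ᵥ (J *ᵥ a t))) t := by
  convert (ha.const_mulVec J).dotProduct hb using 1
  rw [smul_mulVec, smul_mulVec, mulVec_smul, smul_dotProduct, dotProduct_add, dotProduct_smul,
    mulVec_dotProduct_of_transpose_eq_neg hJ, dotProduct_mulVec_mul_transpose_mul,
    dotProduct_mulVec_mul_transpose_mul, dotProduct_mulVec_mul_transpose_mul,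
    dotProduct_comm (Zᵀ *ᵥ (J *ᵥ b t)), smul_eq_mul, smul_eq_mul]
  ring

end Symplectic

/-- for the fundamental solution `Ψ(s,·)` of `∂ₜΨ = s·ZZᵀJΨ`, `Ψ(s,0) = I`,
one has `σ(Ψ(s,1)x, ∂ₛΨ(s,1)x) = ∫₀¹ ‖Zᵀ J Ψ(s,t) x‖² dt ≥ 0`. -/
theorem statement13 (n k : ℕ)
    (Z : ℝ → Matrix (Fin n ⊕ Fin n) (Fin k) ℝ) (hZ : Continuous Z)
    (J : Matrix (Fin n ⊕ Fin n) (Fin n ⊕ Fin n) ℝ)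
    (hJ : J = Matrix.fromBlocks 0 (-1) 1 0)
    (Ψ : ℝ × ℝ → Matrix (Fin n ⊕ Fin n) (Fin n ⊕ Fin n) ℝ)
    (hC2 : ∀ i j, ContDiff ℝ 2 (fun p : ℝ × ℝ => Ψ p i j))
    (hode : ∀ s t, ∀ i j, HasDerivAt (fun τ => Ψ (s, τ) i j)
      ((s • (Z t * (Z t)ᵀ * J) * Ψ (s, t)) i j) t)
    (hinit : ∀ s, Ψ (s, 0) = 1)
    (Ψs : ℝ → ℝ → Matrix (Fin n ⊕ Fin n) (Fin n ⊕ Fin n) ℝ)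
    (hΨs : ∀ s t, Ψs s t = Matrix.of fun i j => deriv (fun r => Ψ (r, t) i j) s)
    (s : ℝ) (x : (Fin n ⊕ Fin n) → ℝ) :
    ((J *ᵥ (Ψ (s, 1) *ᵥ x)) ⬝ᵥ (Ψs s 1 *ᵥ x)
      = ∫ t in (0:ℝ)..1,
          ((Z t)ᵀ *ᵥ (J *ᵥ (Ψ (s, t) *ᵥ x))) ⬝ᵥ ((Z t)ᵀ *ᵥ (J *ᵥ (Ψ (s, t) *ᵥ x)))) ∧
    0 ≤ (J *ᵥ (Ψ (s, 1) *ᵥ x)) ⬝ᵥ (Ψs s 1 *ᵥ x) := by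
  have hJ_anti : Jᵀ = -J := by simp [hJ, fromBlocks_transpose, fromBlocks_neg]
  have hΨs_snd := hasDerivAt_deriv_fst_of_linear_ode (M := fun t => Z t * (Z t)ᵀ * J) hC2
    hode (hΨs s)
  have hg : ∀ t, HasDerivAt (fun τ => (J *ᵥ (Ψ (s, τ) *ᵥ x)) ⬝ᵥ (Ψs s τ *ᵥ x))
      (((Z t)ᵀ *ᵥ (J *ᵥ (Ψ (s, t) *ᵥ x))) ⬝ᵥ ((Z t)ᵀ *ᵥ (J *ᵥ (Ψ (s, t) *ᵥ x)))) t := fun t => by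
    refine hasDerivAt_symplectic_pairing hJ_anti (Z t) s ?_ ?_
    · simpa [mulVec_mulVec] using hasDerivAt_mulVec (hode s t) x
    · simpa [mulVec_mulVec, add_mulVec] using hasDerivAt_mulVec (hΨs_snd t) x
  have hΨs_zero : Ψs s 0 = 0 := by ext i j; simp [hΨs, hinit]
  have h_cont : Continuous fun t =>
      ((Z t)ᵀ *ᵥ (J *ᵥ (Ψ (s, t) *ᵥ x))) ⬝ᵥ ((Z t)ᵀ *ᵥ (J *ᵥ (Ψ (s, t) *ᵥ x))) := by
    have hΨ_cont : Continuous fun t => Ψ (s, t) := continuous_matrix fun i j =>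
      (hC2 i j).continuous.comp (continuous_const.prodMk continuous_id)
    have hv : Continuous fun t => (Z t)ᵀ *ᵥ (J *ᵥ (Ψ (s, t) *ᵥ x)) :=
      hZ.matrix_transpose.matrix_mulVec
        (continuous_const.matrix_mulVec (hΨ_cont.matrix_mulVec continuous_const))
    exact hv.dotProduct hv
  have h_eq := intervalIntegral.integral_eq_sub_of_hasDerivAt (fun t _ => hg t)
    (h_cont.intervalIntegrable 0 1)
  simp only [hinit, hΨs_zero, zero_mulVec, dotProduct_zero, sub_zero] at h_eq
  refine ⟨h_eq.symm, h_eq ▸ intervalIntegral.integral_nonneg zero_le_one fun t _ => ?_⟩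
  simpa using dotProduct_self_star_nonneg ((Z t)ᵀ *ᵥ (J *ᵥ (Ψ (s, t) *ᵥ x)))
end

section
/- For every s ≠ 0 and every ξ ∈ V: σ(Bˢξ, (d/ds)Bˢξ) = (1/s²) · g(Pξ, Pξ), where (d/ds)Bˢ = −(1/s²) J⁻¹P; in particular this quantity is nonnegative. -/
open scoped RealInnerProductSpace

noncomputable section

theorem LinearMap.IsSymmetricProjection.inner_apply_self {𝕜 E : Type*} [RCLike 𝕜]
    [NormedAddCommGroup E] [InnerProductSpace 𝕜 E] {T : E →ₗ[𝕜] E}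
    (hT : T.IsSymmetricProjection) (x : E) :
    inner 𝕜 x (T x) = inner 𝕜 (T x) (T x) := by
  rw [hT.isSymmetric x (T x), ← Module.End.mul_apply, hT.isIdempotentElem.eq]

theorem hasDerivAt_one_sub_div_self {s : ℝ} (hs : s ≠ 0) :
    HasDerivAt (fun r : ℝ => (1 - r) / r) (-(1 / s ^ 2)) s := by
  refine (((hasDerivAt_id' s).const_sub 1).div (hasDerivAt_id' s) hs).congr_deriv ?_
  field_simp
  ring

section Skew

variable {V : Type*} [NormedAddCommGroup V] [InnerProductSpace ℝ V]

theorem inner_apply_self_eq_zero_of_skew {J : V → V} (hJ : ∀ x y : V, ⟪J x, y⟫ = -⟪x, J y⟫)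
    (x : V) : ⟪J x, x⟫ = 0 := by
  linarith [hJ x x, real_inner_comm x (J x)]

/-- The `c`-term is `σ(y, y) = 0` with `y = J⁻¹Pξ`, so it drops out. -/
theorem inner_apply_add_smul_symm_apply (J : V ≃ₗ[ℝ] V) (hJ : ∀ x y : V, ⟪J x, y⟫ = -⟪x, J y⟫)
    {P : V →ₗ[ℝ] V} (hP : P.IsSymmetricProjection) (c : ℝ) (ξ : V) :
    ⟪J (ξ + c • J.symm (P ξ)), J.symm (P ξ)⟫ = -⟪P ξ, P ξ⟫ := by
  have hskew : ⟪J (J.symm (P ξ)), J.symm (P ξ)⟫ = 0 := inner_apply_self_eq_zero_of_skew hJ _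
  rw [map_add, map_smul, inner_add_left, real_inner_smul_left, hskew, hJ,
    LinearEquiv.apply_symm_apply, hP.inner_apply_self]
  ring

end Skew

theorem statement14_general (V : Type*) [NormedAddCommGroup V] [InnerProductSpace ℝ V]
    (J : V ≃ₗ[ℝ] V) (hJ : ∀ x y : V, ⟪J x, y⟫ = -⟪x, J y⟫)
    (P : V →ₗ[ℝ] V) (hP2 : P ∘ₗ P = P) (hPsa : ∀ x y : V, ⟪P x, y⟫ = ⟪x, P y⟫)
    (B : ℝ → V →ₗ[ℝ] V)
    (hB : ∀ s : ℝ, B s = LinearMap.id + ((1 - s) / s) • ((J.symm : V →ₗ[ℝ] V) ∘ₗ P))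
    (s : ℝ) (hs : s ≠ 0) (ξ : V) :
    HasDerivAt (fun r => B r ξ) ((-(1 / s ^ 2)) • J.symm (P ξ)) s ∧
    ⟪J (B s ξ), (-(1 / s ^ 2)) • J.symm (P ξ)⟫ = 1 / s ^ 2 * ⟪P ξ, P ξ⟫ ∧
    0 ≤ ⟪J (B s ξ), (-(1 / s ^ 2)) • J.symm (P ξ)⟫ := by
  have hBξ : (fun r => B r ξ) = fun r => ξ + ((1 - r) / r) • J.symm (P ξ) := by
    funext r
    simp [hB r]
  have hP : P.IsSymmetricProjection := ⟨hP2, hPsa⟩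
  have hσ : ⟪J (B s ξ), (-(1 / s ^ 2)) • J.symm (P ξ)⟫ = 1 / s ^ 2 * ⟪P ξ, P ξ⟫ := by
    rw [congrFun hBξ s, real_inner_smul_right, inner_apply_add_smul_symm_apply J hJ hP]
    ring
  refine ⟨?_, hσ, ?_⟩
  · rw [hBξ]
    exact ((hasDerivAt_one_sub_div_self hs).smul_const _).const_add ξ
  · rw [hσ]
    exact mul_nonneg (by positivity) real_inner_self_nonneg

/-- for `Bˢ = id + ((1−s)/s) J⁻¹P`, one has `(d/ds)Bˢ = −(1/s²)J⁻¹P` and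
`σ(Bˢξ, (d/ds)Bˢξ) = (1/s²) g(Pξ, Pξ) ≥ 0`, where `σ(x,y) = g(Jx,y)`. -/
theorem statement14 (V : Type*) [NormedAddCommGroup V] [InnerProductSpace ℝ V]
    [FiniteDimensional ℝ V]
    (J : V ≃ₗ[ℝ] V) (hJ : ∀ x y : V, ⟪J x, y⟫ = -⟪x, J y⟫)
    (P : V →ₗ[ℝ] V) (hP2 : P ∘ₗ P = P) (hPsa : ∀ x y : V, ⟪P x, y⟫ = ⟪x, P y⟫)
    (B : ℝ → V →ₗ[ℝ] V)
    (hB : ∀ s : ℝ, B s = LinearMap.id + ((1 - s) / s) • ((J.symm : V →ₗ[ℝ] V) ∘ₗ P))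
    (s : ℝ) (hs : s ≠ 0) (ξ : V) :
    HasDerivAt (fun r => B r ξ) ((-(1 / s ^ 2)) • J.symm (P ξ)) s ∧
    ⟪J (B s ξ), (-(1 / s ^ 2)) • J.symm (P ξ)⟫ = 1 / s ^ 2 * ⟪P ξ, P ξ⟫ ∧
    0 ≤ ⟪J (B s ξ), (-(1 / s ^ 2)) • J.symm (P ξ)⟫ :=
  statement14_general V J hJ P hP2 hPsa B hB s hs ξ
end
end
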